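/- arXiv:2206.00650 — 3 statements merged into one kernel-verified Lean document; each statement's English description precedes it below -/
import Mathlib

section
/- Assume C² − D² + E² + F² − 2CEF = 1 and F² ≠ 1. Let G(p,q) = F(1+p²q²) − C(p²+q²) + 2Dpq, and let p, q be defined from y, z by the elliptic addition formulas with modulus E (so pq = (y²−z²)/(1−y²z²), p²+q² = 2((1+y²z²)(y²+z²)−4Ey²z²)/(1−y²z²)², Δ(p)Δ(q) = −((1+y²z²)² − 2E(1+y²z²)(y²+z²)+(y²+z²)²)/(1−y²z²)²). Then 2G(p,q) + 2Δ(p)Δ(q) = (2(F−1)/(1−y²z²)²)·(1 − 2E₁y² + y⁴)(1 − 2E₄z² + z⁴), where E₁ = (C−E−D)/(F−1) and E₄ = (C−E+D)/(F−1). -/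
/-!
Substituting the given values of `pq`, `p² + q²` and `Δ(p)Δ(q)` and clearing the denominator
`(1 - y²z²)²` turns the claim into a polynomial identity in `Y = y²`, `Z = z²`. Multiplied by
`F - 1` it factors into the two quartics, because the constraint gives
`(C - E)² - D² = (F - 1)(2CE - F - 1)`, which matches the `YZ` coefficients of both sides.
-/

theorem mul_numerator_eq_quartic_mul_quartic {R : Type*} [CommRing R] {C D E F : R}
    (hconstraint : C^2 - D^2 + E^2 + F^2 - 2*C*E*F = 1) (Y Z : R) :
    (F - 1) * (F * ((1 - Y*Z)^2 + (Y - Z)^2) - 2*C*((1 + Y*Z)*(Y + Z) - 4*E*Y*Z)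
        + 2*D*(Y - Z)*(1 - Y*Z) - ((1 + Y*Z)^2 - 2*E*(1 + Y*Z)*(Y + Z) + (Y + Z)^2)) =
      ((F - 1) - 2*(C - E - D)*Y + (F - 1)*Y^2) * ((F - 1) - 2*(C - E + D)*Z + (F - 1)*Z^2) := by
  linear_combination (-4*Y*Z) * hconstraint

theorem stmt11 (C D E F y z p q Δp Δq : ℂ)
    (hconstraint : C^2 - D^2 + E^2 + F^2 - 2*C*E*F = 1)
    (hF : F ≠ 1) (h : 1 - y^2*z^2 ≠ 0)
    (hpq : p * q = (y^2 - z^2) / (1 - y^2*z^2))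
    (hsum : p^2 + q^2 = 2 * ((1 + y^2*z^2) * (y^2 + z^2) - 4*E*y^2*z^2) / (1 - y^2*z^2)^2)
    (hΔ : Δp * Δq = -((1 + y^2*z^2)^2 - 2*E*(1 + y^2*z^2)*(y^2 + z^2) + (y^2 + z^2)^2)
      / (1 - y^2*z^2)^2) :
    2 * (F*(1 + p^2*q^2) - C*(p^2 + q^2) + 2*D*p*q) + 2 * Δp * Δq =
      (2*(F - 1) / (1 - y^2*z^2)^2) *
        ((1 - 2*((C - E - D)/(F - 1))*y^2 + y^4) * (1 - 2*((C - E + D)/(F - 1))*z^2 + z^4)) := by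
  have hF' : F - 1 ≠ 0 := sub_ne_zero.mpr hF
  have hp2q2 : p^2 * q^2 = (y^2 - z^2)^2 / (1 - y^2*z^2)^2 := by rw [← mul_pow, hpq, div_pow]
  rw [mul_assoc (2*D), mul_assoc 2 Δp, hp2q2, hsum, hpq, hΔ]
  field_simp
  linear_combination mul_numerator_eq_quartic_mul_quartic hconstraint (y^2) (z^2)
end

section
/- Under the same hypotheses with F ≠ −1: 2G(p,q) − 2Δ(p)Δ(q) = (2(F+1)/(1−y²z²)²)·(1 − 2E₂y² + y⁴)(1 − 2E₃z² + z⁴), where E₂ = (C+E−D)/(F+1) and E₃ = (C+E+D)/(F+1). -/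
/-!
Substituting the values of `p q`, `p² + q²` and `Δ(p)Δ(q)` turns `2G(p,q) − 2Δ(p)Δ(q)` into
`2/(1 − y²z²)²` times a polynomial in `y², z²` which is linear in `C, D, E, F`. Expanding the product
`(1 − 2E₂y² + y⁴)(1 − 2E₃z² + z⁴)` gives the same polynomial once `E₂E₃` is eliminated: the
constraint on `C, D, E, F` says exactly that `(C + E)² − D² = (F + 1)(1 − F + 2CE)`.
-/

theorem add_sub_mul_add_add_eq {R : Type*} [CommRing R] {C D E F : R}
    (h : C^2 - D^2 + E^2 + F^2 - 2*C*E*F = 1) :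
    (C + E - D) * (C + E + D) = (F + 1) * (1 - F + 2*C*E) := by
  linear_combination h

theorem mul_quadratic_mul_quadratic {K : Type*} [Field K] {s a b c u v : K} (hs : s ≠ 0)
    (hab : a * b = s * c) :
    s * ((1 - 2*(a/s)*u + u^2) * (1 - 2*(b/s)*v + v^2)) =
      s*(1 + u^2)*(1 + v^2) - 2*a*u*(1 + v^2) - 2*b*v*(1 + u^2) + 4*c*u*v := by
  field_simp
  linear_combination 4*u*v*hab

theorem stmt12 (C D E F y z p q Δp Δq : ℂ)
    (hconstraint : C^2 - D^2 + E^2 + F^2 - 2*C*E*F = 1)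
    (hF : F ≠ -1) (h : 1 - y^2*z^2 ≠ 0)
    (hpq : p * q = (y^2 - z^2) / (1 - y^2*z^2))
    (hsum : p^2 + q^2 = 2 * ((1 + y^2*z^2) * (y^2 + z^2) - 4*E*y^2*z^2) / (1 - y^2*z^2)^2)
    (hΔ : Δp * Δq = -((1 + y^2*z^2)^2 - 2*E*(1 + y^2*z^2)*(y^2 + z^2) + (y^2 + z^2)^2)
      / (1 - y^2*z^2)^2) :
    2 * (F*(1 + p^2*q^2) - C*(p^2 + q^2) + 2*D*p*q) - 2 * Δp * Δq =
      (2*(F + 1) / (1 - y^2*z^2)^2) *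
        ((1 - 2*((C + E - D)/(F + 1))*y^2 + y^4) * (1 - 2*((C + E + D)/(F + 1))*z^2 + z^4)) := by
  have hF1 : F + 1 ≠ 0 := fun h' => hF (eq_neg_of_add_eq_zero_left h')
  have hsubst : 2 * (F*(1 + p^2*q^2) - C*(p^2 + q^2) + 2*D*p*q) - 2 * Δp * Δq =
      2 / (1 - y^2*z^2)^2 * ((F + 1)*(1 + (y^2)^2)*(1 + (z^2)^2) - 2*(C + E - D)*y^2*(1 + (z^2)^2)
        - 2*(C + E + D)*z^2*(1 + (y^2)^2) + 4*(1 - F + 2*C*E)*y^2*z^2) := by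
    rw [show p^2*q^2 = (p*q)^2 by ring, mul_assoc (2*D), hpq, hsum, mul_assoc 2 Δp, hΔ]
    field_simp
    ring
  rw [hsubst, ← mul_quadratic_mul_quadratic hF1 (add_sub_mul_add_add_eq hconstraint)]
  ring
end

section
/- Let α ≠ 0, 2E = α² + α⁻², and for fixed E₃ define z² = (α² − y'²)/(1 − α²y'²). If additionally E₁ satisfies 1 − E(E₁+E₃) + E₁E₃ = 0 and E ≠ E₃, then (1 − 2E₃z² + z⁴)/(2z²) = (E − E₃)(1 − 2E₁y'² + y'⁴)/(1 − 2Ey'² + y'⁴), provided z ≠ 0 and 1 − 2Ey'² + y'⁴ ≠ 0. -/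
theorem stmt16 (α y' E E₁ E₃ z : ℂ) (hα : α ≠ 0) (h : 1 - α^2*y'^2 ≠ 0)
    (hE : 2*E = α^2 + 1/α^2)
    (hz : z^2 = (α^2 - y'^2) / (1 - α^2*y'^2)) (hz0 : z ≠ 0)
    (hE13 : 1 - E*(E₁ + E₃) + E₁*E₃ = 0) (hEE3 : E ≠ E₃)
    (hden : 1 - 2*E*y'^2 + y'^4 ≠ 0) :
    (1 - 2*E₃*z^2 + z^4) / (2*z^2) =
      (E - E₃) * (1 - 2*E₁*y'^2 + y'^4) / (1 - 2*E*y'^2 + y'^4) := by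
  have ha2 : (α:ℂ)^2 ≠ 0 := pow_ne_zero 2 hα
  have hz' : z^2*(1-α^2*y'^2) = α^2-y'^2 := by
    rw [hz]; field_simp
  have hE2 : 2*E*α^2 = α^4+1 := by
    have h' := hE
    field_simp at h'
    linear_combination h'
  rw [div_eq_div_iff (mul_ne_zero two_ne_zero (pow_ne_zero 2 hz0)) hden]
  apply mul_left_cancel₀ ha2
  linear_combination (z^2*(α^2-y'^2) - (1-α^2*y'^2))*hz'
    - (y'^2*(1+z^4)+z^2*(1+y'^4))*hE2 - 4*α^2*z^2*y'^2*hE13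
end
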